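/- Planar Kruskal theorem (case T = single vertex): the collection of planar rooted trees, quasi-ordered by setting U ≤ V iff there exists an order embedding from U to V preserving the root and the depth-first ordering of vertices, is a well-quasi-order; i.e., for any infinite sequence of planar rooted trees U_1, U_2, ... there exist i < j with U_i ≤ U_j. -/

import Mathlib

/-- A finite rooted tree, encoded as a finite partial order (the tree order,
with the root as maximum element) in which the set of elements above any
vertex is a chain (the path from the vertex to the root). -/
structure RTree where
  V : Type
  finite : Finite V
  le : V → V → Prop
  le_refl : ∀ v, le v v
  le_antisymm : ∀ v w, le v w → le w v → v = w
  le_trans : ∀ u v w, le u v → le v w → le u w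
  root : V
  le_root : ∀ v, le v root
  up_total : ∀ u v w, le u v → le u w → le v w ∨ le w v

/-- A planar rooted tree: a rooted tree together with its depth-first ordering,
a linear order on the vertices arising from the total orderings of the incoming
edges at each vertex via a clockwise depth-first tree walk.  Such linear orders
are exactly those in which ancestors precede descendants and every principal
downset of the tree order is an interval. -/
structure PRTree extends RTree where
  dfle : V → V → Prop
  dfle_refl : ∀ v, dfle v v
  dfle_antisymm : ∀ v w, dfle v w → dfle w v → v = w
  dfle_trans : ∀ u v w, dfle u v → dfle v w → dfle u w
  dfle_total : ∀ v w, dfle v w ∨ dfle w v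
  dfle_of_le : ∀ v w, le v w → dfle w v
  downset_interval : ∀ u a b c, le a u → le c u → dfle a b → dfle b c → le b u

/-- A morphism in the category `PT`: an order embedding of vertex sets which
preserves the root and the depth-first ordering. -/
structure PTHom (T U : PRTree) where
  toFun : T.V → U.V
  inj : Function.Injective toFun
  map_le : ∀ v w, T.le v w → U.le (toFun v) (toFun w)
  reflect_le : ∀ v w, U.le (toFun v) (toFun w) → T.le v w
  map_root : toFun T.root = U.root
  map_dfle : ∀ v w, T.dfle v w → U.dfle (toFun v) (toFun w)

def PTHom.id (T : PRTree) : PTHom T T where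
  toFun := fun v => v
  inj := fun _ _ h => h
  map_le := fun _ _ h => h
  reflect_le := fun _ _ h => h
  map_root := rfl
  map_dfle := fun _ _ h => h

def PTHom.comp {T U W : PRTree} (g : PTHom U W) (f : PTHom T U) :
    PTHom T W where
  toFun := fun v => g.toFun (f.toFun v)
  inj := fun _ _ h => f.inj (g.inj h)
  map_le := fun v w h => g.map_le _ _ (f.map_le v w h)
  reflect_le := fun v w h => f.reflect_le _ _ (g.reflect_le _ _ h)
  map_root := by show g.toFun (f.toFun T.root) = W.root; rw [f.map_root, g.map_root]
  map_dfle := fun v w h => g.map_dfle _ _ (f.map_dfle v w h)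


namespace PlanarKruskal

/-- Inductive type of finite planar rooted trees. -/
inductive PTr : Type
  | node : List PTr → PTr

/-- Homeomorphic embedding of planar rooted trees. -/
inductive Emb : PTr → PTr → Prop
  | nest {t u : PTr} {us : List PTr} : Emb t u → u ∈ us → Emb t (.node us)
  | sub {ts us : List PTr} : List.SublistForall₂ Emb ts us → Emb (.node ts) (.node us)

theorem sizeOf_lt_of_mem {l : List PTr} {t : PTr} (h : t ∈ l) :
    sizeOf t < sizeOf (PTr.node l) := by
  have := List.sizeOf_lt_of_mem h
  cases l <;> simp_all <;> omega

theorem sf_refl {R : PTr → PTr → Prop} :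
    ∀ l : List PTr, (∀ x ∈ l, R x x) → List.SublistForall₂ R l l := by
  intro l h
  induction l with
  | nil => exact .nil
  | cons a l ih =>
      exact .cons (h a (by simp)) (ih fun x hx => h x (by simp [hx]))

theorem sf_trans {R : PTr → PTr → Prop} :
    ∀ {as bs cs : List PTr}, List.SublistForall₂ R as bs → List.SublistForall₂ R bs cs →
      (∀ a ∈ as, ∀ b ∈ bs, ∀ c ∈ cs, R a b → R b c → R a c) →
      List.SublistForall₂ R as cs := by
  intro as bs cs h1 h2 ih
  induction h2 generalizing as with
  | nil =>
      cases h1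
      exact .nil
  | @cons b c bs' cs' hbc h2' ih2 =>
      cases h1 with
      | nil => exact .nil
      | cons hab h1' =>
          refine .cons (ih _ (by simp) _ (by simp) _ (by simp) hab hbc) ?_
          exact ih2 h1' (fun a ha b hb c hc r1 r2 =>
            ih a (by simp [ha]) b (by simp [hb]) c (by simp [hc]) r1 r2)
      | cons_right h1' =>
          exact .cons_right (ih2 h1' (fun a ha b hb c hc r1 r2 =>
            ih a ha b (by simp [hb]) c (by simp [hc]) r1 r2))
  | @cons_right c bs' cs' h2' ih2 =>
      exact .cons_right (ih2 h1 (fun a ha b hb c hc r1 r2 =>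
        ih a ha b hb c (by simp [hc]) r1 r2))

theorem sf_mem {R : PTr → PTr → Prop} {as bs : List PTr} (h : List.SublistForall₂ R as bs)
    {a : PTr} (ha : a ∈ as) : ∃ b ∈ bs, R a b := by
  induction h with
  | nil => simp at ha
  | cons hr h ih =>
      rcases List.mem_cons.1 ha with rfl | ha'
      · exact ⟨_, by simp, hr⟩
      · obtain ⟨b, hb, hab⟩ := ih ha'
        exact ⟨b, by simp [hb], hab⟩
  | cons_right h ih =>
      obtain ⟨b, hb, hab⟩ := ih ha
      exact ⟨b, by simp [hb], hab⟩

theorem emb_refl : ∀ t : PTr, Emb t t := by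
  intro t
  induction t using PTr.rec (motive_2 := fun l => ∀ x ∈ l, Emb x x) with
  | node l ih => exact .sub (sf_refl l ih)
  | nil =>
      rename_i hx
      exact absurd hx (by simp)
  | cons a l ha hl =>
      rename_i x hx
      rcases List.mem_cons.1 hx with rfl | hx'
      · exact ha
      · exact hl x hx'

theorem emb_trans : ∀ {a b c : PTr}, Emb a b → Emb b c → Emb a c := by
  suffices H : ∀ n : ℕ, ∀ a b c : PTr, sizeOf a + sizeOf b + sizeOf c ≤ n →
      Emb a b → Emb b c → Emb a c by
    intro a b c h1 h2
    exact H _ a b c le_rfl h1 h2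
  intro n
  induction n with
  | zero =>
      intro a _ _ h _ _
      cases a <;> simp at h <;> omega
  | succ n ih =>
      intro a b c hsz h1 h2
      cases h2 with
      | @nest _ u us h2' hu =>
          refine .nest (ih a b u ?_ h1 h2') hu
          have := sizeOf_lt_of_mem hu
          omega
      | @sub bs cs hl2 =>
          cases h1 with
          | @nest _ u _ h1' hu =>
              obtain ⟨v, hv, huv⟩ := sf_mem hl2 hu
              have h3 : Emb a v := by
                refine ih a u v ?_ h1' huv
                have h4 := sizeOf_lt_of_mem hu
                have h5 := sizeOf_lt_of_mem hv
                omega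
              exact .nest h3 hv
          | @sub as _ hl1 =>
              refine .sub (sf_trans hl1 hl2 ?_)
              intro x hx y hy z hz r1 r2
              refine ih x y z ?_ r1 r2
              have h4 := sizeOf_lt_of_mem hx
              have h5 := sizeOf_lt_of_mem hy
              have h6 := sizeOf_lt_of_mem hz
              omega

instance : IsRefl PTr Emb := ⟨emb_refl⟩
instance : IsTrans PTr Emb := ⟨fun _ _ _ => emb_trans⟩
instance : IsPreorder PTr Emb := { refl := emb_refl, trans := fun _ _ _ => emb_trans }

def PTr.children : PTr → List PTr
  | .node l => l

theorem PTr.node_children : ∀ t : PTr, t = .node t.children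
  | .node _ => rfl

/-- Kruskal's theorem for `Emb`. -/
theorem emb_pwo : (Set.univ : Set PTr).PartiallyWellOrderedOn Emb := by
  rw [Set.PartiallyWellOrderedOn.iff_not_exists_isMinBadSeq sizeOf]
  rintro ⟨f, hbad, hmin⟩
  -- the set of all children of the minimal bad sequence is pwo
  set S : Set PTr := {t | ∃ n, t ∈ (f n).children} with hS
  have hSpwo : S.PartiallyWellOrderedOn Emb := by
    intro g0
    set g : ℕ → PTr := fun n => (g0 n).1
    have hg : ∀ n, g n ∈ S := fun n => (g0 n).2
    by_contra hcon
    push_neg at hcon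
    choose φ hφ using hg
    -- n₀ minimizes φ
    obtain ⟨n₀, hn₀⟩ : ∃ n₀, ∀ m, φ n₀ ≤ φ m := by
      obtain ⟨n₀, hk⟩ := Nat.sInf_mem (s := Set.range φ) ⟨φ 0, 0, rfl⟩
      exact ⟨n₀, fun m => hk ▸ Nat.sInf_le ⟨m, rfl⟩⟩
    set F : ℕ → PTr := fun m => if m < φ n₀ then f m else g (n₀ + (m - φ n₀)) with hF
    have hFbad : Set.PartiallyWellOrderedOn.IsBadSeq Emb Set.univ F := by
      constructor
      · intro n; trivial
      · intro i j hij hemb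
        by_cases hi : i < φ n₀ <;> by_cases hj : j < φ n₀ <;>
          simp only [hF, if_pos, if_neg, hi, hj, if_true, if_false] at hemb
        · exact hbad.2 i j hij hemb
        · -- i < φ n₀ ≤ j : Emb (f i) (g (n₀ + (j - φ n₀)))
          have hmem := hφ (n₀ + (j - φ n₀))
          have : Emb (f i) (f (φ (n₀ + (j - φ n₀)))) := by
            rw [PTr.node_children (f (φ (n₀ + (j - φ n₀))))]
            exact .nest hemb hmem
          exact hbad.2 i (φ (n₀ + (j - φ n₀))) (lt_of_lt_of_le hi (hn₀ _)) this
        · omega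
        · exact hcon (n₀ + (i - φ n₀)) (n₀ + (j - φ n₀)) (by omega) hemb
    have hagree : ∀ m, m < φ n₀ → f m = F m := fun m hm => by simp [hF, if_pos hm]
    have hsize : sizeOf (F (φ n₀)) < sizeOf (f (φ n₀)) := by
      have : F (φ n₀) = g n₀ := by simp [hF]
      rw [this]
      have := sizeOf_lt_of_mem (hφ n₀)
      rw [← PTr.node_children (f (φ n₀))] at this
      exact this
    exact hmin (φ n₀) F hagree hsize hFbad
  -- Higman
  have hH := hSpwo.partiallyWellOrderedOn_sublistForall₂ (r := Emb)
  obtain ⟨i, j, hij, hemb⟩ := hH.exists_lt (f := fun n => (f n).children)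
    (fun n x hx => ⟨n, hx⟩)
  refine hbad.2 i j hij ?_
  rw [PTr.node_children (f i), PTr.node_children (f j)]
  exact .sub hemb

end PlanarKruskal

namespace PlanarKruskal

/-! ### Basic facts about planar rooted trees -/

theorem dfle_root (U : PRTree) (v : U.V) : U.dfle U.root v :=
  U.dfle_of_le v U.root (U.le_root v)

/-- Downsets of incomparable vertices in depth-first order are ordered. -/
theorem ordered_downsets {U : PRTree} {p q x y : U.V} (hpq : U.dfle p q)
    (h1 : ¬U.le p q) (h2 : ¬U.le q p) (hx : U.le x p) (hy : U.le y q) :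
    U.dfle x y ∧ x ≠ y := by
  constructor
  · by_contra hnd
    have hyx : U.dfle y x := (U.dfle_total x y).resolve_left hnd
    have hpy : U.dfle p y := U.dfle_trans _ _ _ hpq (U.dfle_of_le y q hy)
    have hyp : U.le y p := U.downset_interval p p y x (U.le_refl p) hx hpy hyx
    rcases U.up_total y p q hyp hy with h | h
    · exact h1 h
    · exact h2 h
  · rintro rfl
    rcases U.up_total x p q hx hy with h | h
    · exact h1 h
    · exact h2 h

/-- The subtree of a planar rooted tree below a vertex. -/
def sub (U : PRTree) (c : U.V) : PRTree where
  V := {v : U.V // U.le v c}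
  finite := by have := U.finite; exact Subtype.finite
  le x y := U.le x.1 y.1
  le_refl v := U.le_refl v.1
  le_antisymm v w h1 h2 := Subtype.ext (U.le_antisymm _ _ h1 h2)
  le_trans u v w := U.le_trans _ _ _
  root := ⟨c, U.le_refl c⟩
  le_root v := v.2
  up_total u v w := U.up_total _ _ _
  dfle x y := U.dfle x.1 y.1
  dfle_refl v := U.dfle_refl v.1
  dfle_antisymm v w h1 h2 := Subtype.ext (U.dfle_antisymm _ _ h1 h2)
  dfle_trans u v w := U.dfle_trans _ _ _
  dfle_total v w := U.dfle_total _ _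
  dfle_of_le v w h := U.dfle_of_le _ _ h
  downset_interval u a b c h1 h2 h3 h4 := U.downset_interval u.1 a.1 b.1 c.1 h1 h2 h3 h4

/-- Order embedding preserving the depth-first order but not necessarily the root. -/
structure Hom0 (T U : PRTree) where
  toFun : T.V → U.V
  inj : Function.Injective toFun
  map_le : ∀ v w, T.le v w → U.le (toFun v) (toFun w)
  reflect_le : ∀ v w, U.le (toFun v) (toFun w) → T.le v w
  map_dfle : ∀ v w, T.dfle v w → U.dfle (toFun v) (toFun w)

def inclHom (U : PRTree) (c : U.V) : Hom0 (sub U c) U where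
  toFun := Subtype.val
  inj := Subtype.val_injective
  map_le _ _ h := h
  reflect_le _ _ h := h
  map_dfle _ _ h := h

def Hom0.comp {A B C : PRTree} (g : Hom0 B C) (f : Hom0 A B) : Hom0 A C where
  toFun := fun v => g.toFun (f.toFun v)
  inj := fun _ _ h => f.inj (g.inj h)
  map_le := fun v w h => g.map_le _ _ (f.map_le v w h)
  reflect_le := fun v w h => f.reflect_le _ _ (g.reflect_le _ _ h)
  map_dfle := fun v w h => g.map_dfle _ _ (f.map_dfle v w h)

/-- `Rep t U` : the inductive planar tree `t` represents the abstract planar rooted tree `U`. -/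
inductive Rep : PTr → PRTree → Prop
  | mk {ts : List PTr} {U : PRTree} (c : Fin ts.length → U.V)
      (hmono : ∀ i j : Fin ts.length, i < j → U.dfle (c i) (c j))
      (hincomp : ∀ i j : Fin ts.length, i ≠ j → ¬U.le (c i) (c j))
      (hne : ∀ i, c i ≠ U.root)
      (hcover : ∀ v : U.V, v = U.root ∨ ∃ i, U.le v (c i))
      (hrep : ∀ i : Fin ts.length, Rep (ts.get i) (sub U (c i))) :
      Rep (.node ts) U

/-- Every planar rooted tree is represented by some inductive planar tree. -/
theorem rep_total : ∀ U : PRTree, ∃ t, Rep t U := by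
  suffices H : ∀ (n : ℕ) (U : PRTree), Nat.card U.V ≤ n → ∃ t, Rep t U from
    fun U => H _ U le_rfl
  intro n
  induction n with
  | zero =>
      intro U h
      exfalso
      have h1 : 0 < Nat.card U.V := @Nat.card_pos U.V ⟨U.root⟩ U.finite
      omega
  | succ n ih =>
      intro U hcard
      classical
      haveI := U.finite
      letI : IsTrans U.V U.dfle := ⟨U.dfle_trans⟩
      letI : IsAntisymm U.V U.dfle := ⟨U.dfle_antisymm⟩
      letI : IsTotal U.V U.dfle := ⟨U.dfle_total⟩
      letI : DecidableRel U.dfle := Classical.decRel _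
      set Ch : Set U.V := {v | v ≠ U.root ∧ ∀ w, U.le v w → w = v ∨ w = U.root} with hCh
      have hChfin : Ch.Finite := Set.toFinite Ch
      set L : List U.V := hChfin.toFinset.sort U.dfle with hL
      have hmemL : ∀ x, x ∈ L ↔ x ∈ Ch := by
        intro x
        rw [hL, Finset.mem_sort, Set.Finite.mem_toFinset]
      set c : Fin L.length → U.V := L.get with hc
      have hcmem : ∀ i, c i ∈ Ch := fun i => (hmemL _).1 (L.get_mem i)
      have hcinj : Function.Injective c := List.nodup_iff_injective_get.1 (Finset.sort_nodup _ _)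
      have hmono : ∀ i j : Fin L.length, i < j → U.dfle (c i) (c j) :=
        fun i j hij => (Finset.pairwise_sort _ U.dfle).rel_get_of_lt hij
      have hincomp : ∀ i j : Fin L.length, i ≠ j → ¬U.le (c i) (c j) := by
        intro i j hij hle
        rcases (hcmem i).2 _ hle with h | h
        · exact hij (hcinj h).symm
        · exact (hcmem j).1 h
      have hne : ∀ i, c i ≠ U.root := fun i => (hcmem i).1
      have hcover : ∀ v : U.V, v = U.root ∨ ∃ i, U.le v (c i) := by
        intro v
        by_cases hv : v = U.root
        · exact Or.inl hv
        right
        set A : Set U.V := {w | U.le v w ∧ w ≠ U.root} with hA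
        have hAfin : A.Finite := Set.toFinite A
        obtain ⟨m, hmA, hmmin⟩ :=
          Set.exists_min_image A (fun w => Set.ncard {x | U.le w x}) hAfin
            ⟨v, U.le_refl v, hv⟩
        have hchild : m ∈ Ch := by
          refine ⟨hmA.2, fun w hw => ?_⟩
          by_contra hcon
          push_neg at hcon
          have hwA : w ∈ A := ⟨U.le_trans _ _ _ hmA.1 hw, hcon.2⟩
          have hsub : {x | U.le w x} ⊂ {x | U.le m x} := by
            constructor
            · intro x hx
              exact U.le_trans _ _ _ hw hx
            · intro hsup
              have : U.le w m := hsup (U.le_refl m)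
              exact hcon.1 (U.le_antisymm _ _ this hw)
          have := Set.ncard_lt_ncard hsub (Set.toFinite _)
          exact absurd (hmmin w hwA) (by omega)
        obtain ⟨i, hi⟩ := List.mem_iff_get.1 ((hmemL m).2 hchild)
        exact ⟨i, by rw [hc, hi]; exact hmA.1⟩
      have hsubcard : ∀ i, Nat.card (sub U (c i)).V ≤ n := by
        intro i
        have h1 : Nat.card {v : U.V // U.le v (c i)} < Nat.card U.V := by
          refine Finite.card_subtype_lt (x := U.root) ?_
          intro hcon
          exact hne i (U.le_antisymm _ _ (U.le_root (c i)) hcon)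
        have h2 : Nat.card (sub U (c i)).V = Nat.card {v : U.V // U.le v (c i)} := rfl
        omega
      have hex : ∀ i : Fin L.length, ∃ t, Rep t (sub U (c i)) :=
        fun i => ih (sub U (c i)) (hsubcard i)
      choose g hg using hex
      refine ⟨.node (List.ofFn g), ?_⟩
      have hlen : (List.ofFn g).length = L.length := List.length_ofFn
      refine Rep.mk (fun i => c (Fin.cast hlen i)) ?_ ?_ ?_ ?_ ?_
      · intro i j hij
        exact hmono _ _ (by simpa using hij)
      · intro i j hij
        refine hincomp _ _ ?_
        intro h
        exact hij (by ext; simpa using congrArg Fin.val h)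
      · intro i; exact hne _
      · intro v
        rcases hcover v with h | ⟨i, hi⟩
        · exact Or.inl h
        · exact Or.inr ⟨Fin.cast hlen.symm i, by simpa using hi⟩
      · intro i
        have := List.get_ofFn g i
        rw [this]
        exact hg _

end PlanarKruskal

namespace PlanarKruskal

theorem sf_phi {R : PTr → PTr → Prop} {as bs : List PTr} (h : List.SublistForall₂ R as bs) :
    ∃ φ : Fin as.length → Fin bs.length, StrictMono φ ∧
      ∀ i, R (as.get i) (bs.get (φ i)) := by
  rw [List.sublistForall₂_iff] at h
  obtain ⟨l, hfa, hsl⟩ := h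
  obtain ⟨f, hf⟩ := List.sublist_iff_exists_fin_orderEmbedding_get_eq.1 hsl
  obtain ⟨hlen, hget⟩ := List.forall₂_iff_get.1 hfa
  refine ⟨fun i => f (Fin.cast hlen i), ?_, ?_⟩
  · intro i j hij
    exact f.strictMono (show (Fin.cast hlen i : Fin l.length) < Fin.cast hlen j from hij)
  · intro i
    have h2 : (i : ℕ) < l.length := by omega
    have h3 := hget i.1 i.2 h2
    rw [hf ⟨i.1, h2⟩] at h3
    exact h3

theorem glue {ts us : List PTr} {W W' : PRTree}
    (hW : Rep (.node ts) W) (hW' : Rep (.node us) W')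
    (φ : Fin ts.length → Fin us.length) (hφ : StrictMono φ)
    (hpt : ∀ (i : Fin ts.length) (A B : PRTree), Rep (ts.get i) A → Rep (us.get (φ i)) B →
      Nonempty (Hom0 A B)) :
    ∃ F : Hom0 W W', F.toFun W.root = W'.root := by
  classical
  cases hW with
  | mk c hmono hincomp hne hcover hrep =>
  cases hW' with
  | mk d hmono' hincomp' hne' hcover' hrep' =>
  have hf : ∀ i, Nonempty (Hom0 (sub W (c i)) (sub W' (d (φ i)))) :=
    fun i => hpt i _ _ (hrep i) (hrep' (φ i))
  let f : ∀ i, Hom0 (sub W (c i)) (sub W' (d (φ i))) := fun i => (hf i).some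
  have uniq : ∀ (v : W.V) (i j), W.le v (c i) → W.le v (c j) → i = j := by
    intro v i j h1 h2
    by_contra hij
    rcases W.up_total v _ _ h1 h2 with h | h
    · exact hincomp i j hij h
    · exact hincomp j i (Ne.symm hij) h
  have uniq' : ∀ (v : W'.V) (a b : Fin us.length), W'.le v (d a) → W'.le v (d b) → a = b := by
    intro v a b h1 h2
    by_contra hab
    rcases W'.up_total v _ _ h1 h2 with h | h
    · exact hincomp' a b hab h
    · exact hincomp' b a (Ne.symm hab) h
  let idx : ∀ v : W.V, v ≠ W.root → Fin ts.length := fun v hv =>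
    ((hcover v).resolve_left hv).choose
  have hidx : ∀ v hv, W.le v (c (idx v hv)) := fun v hv =>
    ((hcover v).resolve_left hv).choose_spec
  let F : W.V → W'.V := fun v =>
    if h : v = W.root then W'.root else ((f (idx v h)).toFun ⟨v, hidx v h⟩).1
  have hFval : ∀ v (h : v ≠ W.root), F v = ((f (idx v h)).toFun ⟨v, hidx v h⟩).1 :=
    fun v h => dif_neg h
  have hFroot : F W.root = W'.root := dif_pos rfl
  have hFd : ∀ v (h : v ≠ W.root), W'.le (F v) (d (φ (idx v h))) := by
    intro v h
    rw [hFval v h]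
    exact ((f (idx v h)).toFun ⟨v, hidx v h⟩).2
  have hFne : ∀ v (h : v ≠ W.root), F v ≠ W'.root := by
    intro v h heq
    have h1 := hFd v h
    rw [heq] at h1
    exact hne' _ (W'.le_antisymm _ _ (W'.le_root _) h1)
  -- generalized same-index helpers
  have key_inj : ∀ (v w : W.V) (i j : Fin ts.length) (hx : W.le v (c i)) (hy : W.le w (c j)),
      i = j → ((f i).toFun ⟨v, hx⟩).1 = ((f j).toFun ⟨w, hy⟩).1 → v = w := by
    rintro v w i j hx hy rfl h
    have := (f i).inj (Subtype.ext h)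
    exact congrArg Subtype.val this
  have key_maple : ∀ (v w : W.V) (i j : Fin ts.length) (hx : W.le v (c i)) (hy : W.le w (c j)),
      i = j → W.le v w → W'.le ((f i).toFun ⟨v, hx⟩).1 ((f j).toFun ⟨w, hy⟩).1 := by
    rintro v w i j hx hy rfl h
    exact (f i).map_le ⟨v, hx⟩ ⟨w, hy⟩ h
  have key_refle : ∀ (v w : W.V) (i j : Fin ts.length) (hx : W.le v (c i)) (hy : W.le w (c j)),
      i = j → W'.le ((f i).toFun ⟨v, hx⟩).1 ((f j).toFun ⟨w, hy⟩).1 → W.le v w := by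
    rintro v w i j hx hy rfl h
    exact (f i).reflect_le ⟨v, hx⟩ ⟨w, hy⟩ h
  have key_dfle : ∀ (v w : W.V) (i j : Fin ts.length) (hx : W.le v (c i)) (hy : W.le w (c j)),
      i = j → W.dfle v w → W'.dfle ((f i).toFun ⟨v, hx⟩).1 ((f j).toFun ⟨w, hy⟩).1 := by
    rintro v w i j hx hy rfl h
    exact (f i).map_dfle ⟨v, hx⟩ ⟨w, hy⟩ h
  -- the index of the image
  have hsame : ∀ (v w : W.V) (hv : v ≠ W.root) (hw : w ≠ W.root),
      W'.le (F v) (F w) ∨ F v = F w → idx v hv = idx w hw := by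
    intro v w hv hw hle
    have h1 := hFd v hv
    have h2 := hFd w hw
    have h3 : W'.le (F v) (d (φ (idx w hw))) := by
      rcases hle with hle | hle
      · exact W'.le_trans _ _ _ hle h2
      · rw [hle]; exact h2
    exact hφ.injective (uniq' (F v) _ _ h1 h3)
  refine ⟨⟨F, ?_, ?_, ?_, ?_⟩, hFroot⟩
  · -- injective
    intro v w hvw
    by_cases hv : v = W.root <;> by_cases hw : w = W.root
    · rw [hv, hw]
    · exact absurd (by rw [← hvw, hv, hFroot]) (Ne.symm (hFne w hw))
    · exact absurd (by rw [hvw, hw, hFroot]) (Ne.symm (hFne v hv))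
    · have hij := hsame v w hv hw (Or.inr hvw)
      rw [hFval v hv, hFval w hw] at hvw
      exact key_inj v w _ _ _ _ hij hvw
  · -- map_le
    intro v w h
    by_cases hw : w = W.root
    · rw [hw, hFroot]; exact W'.le_root _
    by_cases hv : v = W.root
    · exfalso
      rw [hv] at h
      exact hw (W.le_antisymm _ _ (W.le_root w) h)
    · have hij : idx v hv = idx w hw :=
        uniq v _ _ (hidx v hv) (W.le_trans _ _ _ h (hidx w hw))
      rw [hFval v hv, hFval w hw]
      exact key_maple v w _ _ _ _ hij h
  · -- reflect_le
    intro v w h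
    by_cases hw : w = W.root
    · rw [hw]; exact W.le_root _
    by_cases hv : v = W.root
    · exfalso
      rw [hv, hFroot] at h
      exact hFne w hw (W'.le_antisymm _ _ (W'.le_root _) h)
    · have hij := hsame v w hv hw (Or.inl h)
      rw [hFval v hv, hFval w hw] at h
      exact key_refle v w _ _ _ _ hij h
  · -- map_dfle
    intro v w h
    by_cases hv : v = W.root
    · rw [hv, hFroot]; exact dfle_root W' _
    by_cases hw : w = W.root
    · exfalso
      rw [hw] at h
      exact hv (W.dfle_antisymm _ _ h (dfle_root W v))
    · by_cases hij : idx v hv = idx w hw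
      · rw [hFval v hv, hFval w hw]
        exact key_dfle v w _ _ _ _ hij h
      · have hlt : idx v hv < idx w hw := by
          rcases lt_or_gt_of_ne hij with hlt | hgt
          · exact hlt
          · exfalso
            have hod := ordered_downsets (U := W) (hmono _ _ hgt)
              (hincomp _ _ (Ne.symm hij)) (hincomp _ _ hij)
              (hidx w hw) (hidx v hv)
            exact hod.2 (W.dfle_antisymm _ _ hod.1 h)
        have hphi : φ (idx v hv) < φ (idx w hw) := hφ hlt
        have hod := ordered_downsets (U := W') (hmono' _ _ hphi)
          (hincomp' _ _ (ne_of_lt hphi)) (hincomp' _ _ (ne_of_gt hphi))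
          (hFd v hv) (hFd w hw)
        exact hod.1

/-- Main semantic lemma: embeddings of codes give morphisms. -/
theorem emb_hom : ∀ (N : ℕ) {t u : PTr}, sizeOf t + sizeOf u ≤ N → Emb t u →
    ∀ (W W' : PRTree), Rep t W → Rep u W' → Nonempty (Hom0 W W') := by
  intro N
  induction N with
  | zero =>
      intro t u h
      exfalso
      cases t <;> simp at h <;> omega
  | succ N ih =>
      intro t u hsz hemb W W' hW hW'
      cases hemb with
      | @nest _ u' us h' hu =>
          cases hW' with
          | mk d hmono' hincomp' hne' hcover' hrep' =>
              obtain ⟨j, hj⟩ := List.mem_iff_get.1 hu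
              have hrepj : Rep u' (sub W' (d j)) := hj ▸ hrep' j
              have hszj : sizeOf t + sizeOf u' ≤ N := by
                have := sizeOf_lt_of_mem hu
                omega
              obtain ⟨g⟩ := ih hszj h' W (sub W' (d j)) hW hrepj
              exact ⟨(inclHom W' (d j)).comp g⟩
      | @sub ts us hl =>
          obtain ⟨φ, hφ, hpt⟩ := sf_phi hl
          have hsub : ∀ (i : Fin ts.length) (A B : PRTree),
              Rep (ts.get i) A → Rep (us.get (φ i)) B → Nonempty (Hom0 A B) := by
            intro i A B hA hB
            refine ih ?_ (hpt i) A B hA hB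
            have h1 := sizeOf_lt_of_mem (show ts.get i ∈ ts from ts.get_mem i)
            have h2 := sizeOf_lt_of_mem (show us.get (φ i) ∈ us from us.get_mem (φ i))
            omega
          obtain ⟨F, _⟩ := glue hW hW' φ hφ hsub
          exact ⟨F⟩

theorem emb_pthom {ts us : List PTr} {W W' : PRTree} (h : List.SublistForall₂ Emb ts us)
    (hW : Rep (.node ts) W) (hW' : Rep (.node us) W') : Nonempty (PTHom W W') := by
  obtain ⟨φ, hφ, hpt⟩ := sf_phi h
  obtain ⟨F, hFroot⟩ := glue hW hW' φ hφ
    (fun i A B hA hB => emb_hom _ le_rfl (hpt i) A B hA hB)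
  exact ⟨⟨F.toFun, F.inj, F.map_le, F.reflect_le, hFroot, F.map_dfle⟩⟩

end PlanarKruskal

/-- Planar Kruskal theorem (case `T = •`): planar rooted trees, quasi-ordered
by the existence of a root- and depth-first-ordering-preserving order
embedding, form a well-quasi-order. -/
theorem planar_kruskal (s : ℕ → PRTree) :
    ∃ i j, i < j ∧ Nonempty (PTHom (s i) (s j)) := by
  classical
  open PlanarKruskal in
  · choose t ht using fun n => rep_total (s n)
    have hH := emb_pwo.partiallyWellOrderedOn_sublistForall₂ (r := Emb)
    obtain ⟨i, j, hij, hsf⟩ := hH.exists_lt (f := fun n => (t n).children) (fun n x _ => trivial)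
    refine ⟨i, j, hij, emb_pthom hsf ?_ ?_⟩
    · rw [← PTr.node_children]; exact ht i
    · rw [← PTr.node_children]; exact ht j
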